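/- For every positive odd integer n, (q;q^2)_{(n-1)/2}^2 / (aq^2, q^2/a; q^2)_{(n-1)/2} ≡ n(1-a) a^{(n-1)/2} / ((1-a^n) q^{(n-1)/2}) modulo Φ_n(q), as a congruence of rational functions in q and a. -/

import Mathlib

open Finset

noncomputable section

abbrev KK : Type := FractionRing (MvPolynomial (Fin 4) ℚ)
abbrev FF : Type := RatFunc KK

def q : FF := RatFunc.X
def aK : KK := algebraMap (MvPolynomial (Fin 4) ℚ) KK (MvPolynomial.X 0)
def bK : KK := algebraMap (MvPolynomial (Fin 4) ℚ) KK (MvPolynomial.X 1)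
def cK : KK := algebraMap (MvPolynomial (Fin 4) ℚ) KK (MvPolynomial.X 2)
def dK : KK := algebraMap (MvPolynomial (Fin 4) ℚ) KK (MvPolynomial.X 3)
def pa : FF := RatFunc.C aK
def pb : FF := RatFunc.C bK
def pc : FF := RatFunc.C cK
def pd : FF := RatFunc.C dK

/-- q-shifted factorial (x; Q)_m = prod_{j<m} (1 - x Q^j) -/
def qPoch (x Q : FF) (m : ℕ) : FF := ∏ j ∈ Finset.range m, (1 - x * Q ^ j)

/-- q-integer [m] = (1-q^m)/(1-q) -/
def qInt (m : ℕ) : FF := (1 - q ^ m) / (1 - q)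

/-- the polynomial [n] = 1 + q + ... + q^{n-1} -/
def Pn (n : ℕ) : Polynomial KK := ∑ i ∈ Finset.range n, Polynomial.X ^ i

/-- congruence of rational functions modulo a polynomial D:
A - B = D * P / Q with Q coprime to D -/
def modCong (A B : FF) (D : Polynomial KK) : Prop :=
  ∃ P Q : Polynomial KK, IsCoprime Q D ∧
    (A - B) * algebraMap (Polynomial KK) FF Q =
      algebraMap (Polynomial KK) FF D * algebraMap (Polynomial KK) FF P

/-! Write `n = 2m + 1`. After clearing denominators the congruence says that the polynomial
`(q;q²)_m² (1 - aⁿ) q^m - n (1 - a) a^m (aq²;q²)_m (q²/a;q²)_m` is divisible by `Φ_n`, and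
that the cleared denominator is coprime to `Φ_n`. As `Φ_n` is the product of `X - μ` over the
primitive `n`-th roots of unity `μ`, both are checked at such a root `ζ`. There the odd and even
powers `ζ, ζ², …, ζ^{2m}` run through all nontrivial `n`-th roots of unity, and
`ζ^{-2j} = ζ^{n-2j}` is an odd power; hence `(1 - x) (xζ;ζ²)_m (xζ²;ζ²)_m = 1 - xⁿ`,
`(ζ;ζ²)_m (ζ²;ζ²)_m = n` and `x^m (ζ²/x;ζ²)_m = (-1)^m ζ^{m(m+1)} (xζ;ζ²)_m`, which combine to
the required identity at `ζ`. -/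

open Polynomial

/-- `qPoch` over an arbitrary commutative ring, so that it can be transported along ring
homomorphisms. -/
def qPochhammer {R : Type*} [CommRing R] (x Q : R) (m : ℕ) : R :=
  ∏ j ∈ range m, (1 - x * Q ^ j)

section qPochhammer

variable {R S : Type*} [CommRing R] [CommRing S]

@[simp]
theorem qPochhammer_zero (x Q : R) : qPochhammer x Q 0 = 1 := prod_range_zero _

theorem qPochhammer_succ (x Q : R) (m : ℕ) :
    qPochhammer x Q (m + 1) = qPochhammer x Q m * (1 - x * Q ^ m) :=
  prod_range_succ _ _

theorem map_qPochhammer (f : R →+* S) (x Q : R) (m : ℕ) :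
    f (qPochhammer x Q m) = qPochhammer (f x) (f Q) m := by
  simp [qPochhammer, map_prod]

theorem eval_map_qPochhammer (φ : R →+* S) (μ : S) (x Q : R[X]) (m : ℕ) :
    ((qPochhammer x Q m).map φ).eval μ =
      qPochhammer ((x.map φ).eval μ) ((Q.map φ).eval μ) m := by
  simp only [eval_map]
  exact map_qPochhammer (eval₂RingHom φ μ) x Q m

theorem prod_range_two_mul_one_sub_mul_pow_succ (x ζ : R) (m : ℕ) :
    ∏ k ∈ range (2 * m), (1 - x * ζ ^ (k + 1)) =
      qPochhammer (x * ζ) (ζ ^ 2) m * qPochhammer (x * ζ ^ 2) (ζ ^ 2) m := by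
  induction m with
  | zero => simp
  | succ m ih =>
    rw [show 2 * (m + 1) = 2 * m + 1 + 1 by ring, prod_range_succ, prod_range_succ, ih,
      qPochhammer_succ, qPochhammer_succ]
    ring

theorem prod_neg_pow_two_mul_add_two (ζ : R) (m : ℕ) :
    ∏ j ∈ range m, (-ζ ^ (2 * j + 2)) = (-1) ^ m * ζ ^ (m * (m + 1)) := by
  induction m with
  | zero => simp
  | succ m ih => rw [prod_range_succ, ih]; ring

end qPochhammer

theorem qPochhammer_ne_zero {L : Type*} [Field L] {x Q : L} {m : ℕ}
    (h : ∀ j < m, x * Q ^ j ≠ 1) : qPochhammer x Q m ≠ 0 :=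
  prod_ne_zero_iff.2 fun j hj ↦ sub_ne_zero.2 (h j (mem_range.1 hj)).symm

namespace IsPrimitiveRoot

section Domain

variable {R : Type*} [CommRing R] [IsDomain R] {ζ : R} {n : ℕ}

theorem prod_one_sub_mul_pow (hζ : IsPrimitiveRoot ζ n) (hn : 0 < n) (x : R) :
    ∏ k ∈ range n, (1 - x * ζ ^ k) = 1 - x ^ n := by
  simpa [eval_prod, mul_comm] using
    (congr_arg (eval 1) (X_pow_sub_C_eq_prod hζ hn (rfl : x ^ n = _))).symm

end Domain

section Field

variable {L : Type*} [Field L] {ζ : L} {m : ℕ}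

theorem one_sub_mul_qPochhammer_odd_mul_even (hζ : IsPrimitiveRoot ζ (2 * m + 1)) (x : L) :
    (1 - x) * (qPochhammer (x * ζ) (ζ ^ 2) m * qPochhammer (x * ζ ^ 2) (ζ ^ 2) m) =
      1 - x ^ (2 * m + 1) := by
  rw [← prod_range_two_mul_one_sub_mul_pow_succ, ← hζ.prod_one_sub_mul_pow (by omega),
    prod_range_succ']
  ring

theorem qPochhammer_odd_mul_even (hζ : IsPrimitiveRoot ζ (2 * m + 1)) :
    qPochhammer ζ (ζ ^ 2) m * qPochhammer (ζ ^ 2) (ζ ^ 2) m = (2 * m + 1 : ℕ) := by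
  have hsplit := prod_range_two_mul_one_sub_mul_pow_succ 1 ζ m
  simp only [one_mul] at hsplit
  rw [← hsplit, hζ.prod_one_sub_pow_eq_order]
  push_cast; ring

theorem pow_mul_qPochhammer_inv (hζ : IsPrimitiveRoot ζ (2 * m + 1)) {x : L} (hx : x ≠ 0) :
    x ^ m * qPochhammer (x⁻¹ * ζ ^ 2) (ζ ^ 2) m =
      (-1) ^ m * ζ ^ (m * (m + 1)) * qPochhammer (x * ζ) (ζ ^ 2) m := by
  have hfactor : ∀ j ∈ range m, x * (1 - x⁻¹ * ζ ^ 2 * (ζ ^ 2) ^ j) =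
      (-ζ ^ (2 * j + 2)) * (1 - x * ζ * (ζ ^ 2) ^ (m - 1 - j)) := by
    intro j hj
    have hjm : 2 * j + 2 + (2 * (m - 1 - j) + 1) = 2 * m + 1 := by
      have := mem_range.mp hj; omega
    have hunit : ζ ^ (2 * j + 2) * ζ ^ (2 * (m - 1 - j) + 1) = 1 := by
      rw [← pow_add, hjm, hζ.pow_eq_one]
    field_simp
    linear_combination (-x) * hunit
  calc x ^ m * qPochhammer (x⁻¹ * ζ ^ 2) (ζ ^ 2) m
      = ∏ j ∈ range m, x * (1 - x⁻¹ * ζ ^ 2 * (ζ ^ 2) ^ j) := by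
        rw [qPochhammer, prod_mul_distrib, prod_const, card_range]
    _ = (∏ j ∈ range m, (-ζ ^ (2 * j + 2))) *
          ∏ j ∈ range m, (1 - x * ζ * (ζ ^ 2) ^ (m - 1 - j)) := by
        rw [prod_congr rfl hfactor, prod_mul_distrib]
    _ = (-1) ^ m * ζ ^ (m * (m + 1)) * qPochhammer (x * ζ) (ζ ^ 2) m := by
        rw [prod_range_reflect (fun j ↦ 1 - x * ζ * (ζ ^ 2) ^ j), prod_neg_pow_two_mul_add_two,
          qPochhammer]

theorem qPochhammer_sq_mul_one_sub_pow_mul_pow (hζ : IsPrimitiveRoot ζ (2 * m + 1)) {x : L}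
    (hx : x ≠ 0) :
    qPochhammer ζ (ζ ^ 2) m ^ 2 * (1 - x ^ (2 * m + 1)) * ζ ^ m =
      (2 * m + 1 : ℕ) * (1 - x) * x ^ m *
        (qPochhammer (x * ζ ^ 2) (ζ ^ 2) m * qPochhammer (x⁻¹ * ζ ^ 2) (ζ ^ 2) m) := by
  set c : L := (-1) ^ m * ζ ^ (m * (m + 1))
  have hc : c ^ 2 = ζ ^ m := by
    rw [mul_pow, ← pow_mul, ← pow_mul, show m * (m + 1) * 2 = (2 * m + 1) * m + m by ring,
      pow_add, pow_mul ζ, hζ.pow_eq_one, mul_comm m 2, pow_mul]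
    simp
  have heven : qPochhammer (ζ ^ 2) (ζ ^ 2) m = c * qPochhammer ζ (ζ ^ 2) m := by
    simpa using hζ.pow_mul_qPochhammer_inv one_ne_zero
  rw [← hζ.qPochhammer_odd_mul_even, heven, ← hζ.one_sub_mul_qPochhammer_odd_mul_even x]
  linear_combination (1 - x) * qPochhammer ζ (ζ ^ 2) m ^ 2 * qPochhammer (x * ζ ^ 2) (ζ ^ 2) m *
    ((qPochhammer (x * ζ) (ζ ^ 2) m) * hc.symm - c * (hζ.pow_mul_qPochhammer_inv hx))

end Field

end IsPrimitiveRoot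

namespace Polynomial

variable {K L : Type*} [Field K] [Field L] [Algebra K L] {n : ℕ} {ζ : L}

theorem cyclotomic_dvd_of_isRoot_primitiveRoots (hζ : IsPrimitiveRoot ζ n) {p : K[X]}
    (hp : ∀ μ ∈ primitiveRoots n L, (p.map (algebraMap K L)).IsRoot μ) : cyclotomic n K ∣ p := by
  rw [← map_dvd_map (algebraMap K L) (algebraMap K L).injective (cyclotomic.monic n K),
    map_cyclotomic, cyclotomic_eq_prod_X_sub_primitiveRoots hζ]
  exact prod_dvd_of_coprime (fun μ _ ν _ hne ↦ pairwise_coprime_X_sub_C Function.injective_id hne)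
    fun μ hμ ↦ dvd_iff_isRoot.2 (hp μ hμ)

theorem isCoprime_cyclotomic_of_not_isRoot_primitiveRoots (hζ : IsPrimitiveRoot ζ n) {p : K[X]}
    (hp : ∀ μ ∈ primitiveRoots n L, ¬(p.map (algebraMap K L)).IsRoot μ) :
    IsCoprime p (cyclotomic n K) := by
  rw [← isCoprime_map (algebraMap K L), map_cyclotomic, cyclotomic_eq_prod_X_sub_primitiveRoots hζ]
  exact IsCoprime.prod_right fun μ hμ ↦
    ((irreducible_X_sub_C μ).coprime_iff_not_dvd.2 (mt dvd_iff_isRoot.1 (hp μ hμ))).symm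

end Polynomial

theorem modCong_div_div {f g h k D : KK[X]} (hD : ¬IsUnit D) (hcop : IsCoprime (g * k) D)
    (hdvd : D ∣ f * k - h * g) :
    modCong (algebraMap KK[X] FF f / algebraMap KK[X] FF g)
      (algebraMap KK[X] FF h / algebraMap KK[X] FF k) D := by
  obtain ⟨P, hP⟩ := hdvd
  refine ⟨P, g * k, hcop, ?_⟩
  obtain ⟨hg, hk⟩ := mul_ne_zero_iff.1 fun h ↦ hD (isCoprime_zero_left.1 (h ▸ hcop))
  have hg' := RatFunc.algebraMap_ne_zero hg
  have hk' := RatFunc.algebraMap_ne_zero hk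
  rw [← map_mul, ← hP]
  field_simp
  simp only [map_mul, map_sub]
  ring

theorem aK_ne_zero : aK ≠ 0 :=
  (map_ne_zero_iff _ (IsFractionRing.injective (MvPolynomial (Fin 4) ℚ) KK)).2
    (MvPolynomial.X_ne_zero 0)

theorem aK_pow_ne_one {n : ℕ} (hn : n ≠ 0) : aK ^ n ≠ 1 := by
  intro h
  rw [aK, ← map_pow, ← map_one (algebraMap (MvPolynomial (Fin 4) ℚ) KK),
    (IsFractionRing.injective (MvPolynomial (Fin 4) ℚ) KK).eq_iff] at h
  simpa [zero_pow hn] using congr_arg (MvPolynomial.eval 0) h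

section PrimitiveRoot

variable {L : Type*} [Field L] [Algebra KK L] {m : ℕ} {ζ : L}

theorem cyclotomic_dvd_numerator (hζ : IsPrimitiveRoot ζ (2 * m + 1)) :
    cyclotomic (2 * m + 1) KK ∣
      qPochhammer X (X ^ 2) m ^ 2 * (C (1 - aK ^ (2 * m + 1)) * X ^ m) -
        C (((2 * m + 1 : ℕ) : KK) * (1 - aK) * aK ^ m) *
          (qPochhammer (C aK * X ^ 2) (X ^ 2) m * qPochhammer (C aK⁻¹ * X ^ 2) (X ^ 2) m) := by
  refine cyclotomic_dvd_of_isRoot_primitiveRoots hζ fun μ hμ ↦ ?_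
  have hμ' : IsPrimitiveRoot μ (2 * m + 1) := (mem_primitiveRoots (by omega)).1 hμ
  have ha : algebraMap KK L aK ≠ 0 := (_root_.map_ne_zero _).2 aK_ne_zero
  simp only [IsRoot, Polynomial.map_sub, Polynomial.map_mul, Polynomial.map_pow, Polynomial.map_one,
    Polynomial.map_natCast, eval_sub, eval_mul, eval_pow, eval_one, eval_natCast,
    eval_map_qPochhammer, map_X, map_C, eval_X, eval_C, map_sub, map_one, map_mul, map_pow,
    map_natCast, map_inv₀]
  linear_combination hμ'.qPochhammer_sq_mul_one_sub_pow_mul_pow ha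

theorem isCoprime_denominator_cyclotomic (hζ : IsPrimitiveRoot ζ (2 * m + 1)) :
    IsCoprime
      (qPochhammer (C aK * X ^ 2) (X ^ 2) m * qPochhammer (C aK⁻¹ * X ^ 2) (X ^ 2) m *
        (C (1 - aK ^ (2 * m + 1)) * X ^ m))
      (cyclotomic (2 * m + 1) KK) := by
  refine isCoprime_cyclotomic_of_not_isRoot_primitiveRoots hζ fun μ hμ ↦ ?_
  have hμ' : IsPrimitiveRoot μ (2 * m + 1) := (mem_primitiveRoots (by omega)).1 hμ
  have ha : algebraMap KK L aK ^ (2 * m + 1) ≠ 1 := by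
    rw [← map_pow, ← map_one (algebraMap KK L), (algebraMap KK L).injective.ne_iff]
    exact aK_pow_ne_one (by omega)
  have hfactor : ∀ y : L, y ^ (2 * m + 1) ≠ 1 → ∀ j < m, y * μ ^ 2 * (μ ^ 2) ^ j ≠ 1 := by
    intro y hy j _ h
    apply hy
    simpa [mul_pow, ← pow_mul, mul_comm _ (2 * m + 1), pow_mul μ (2 * m + 1), hμ'.pow_eq_one]
      using congr_arg (· ^ (2 * m + 1)) h
  simp only [IsRoot, Polynomial.map_mul, Polynomial.map_pow, eval_mul, eval_pow,
    eval_map_qPochhammer, map_X, map_C, eval_X, eval_C, map_sub, map_one, map_pow, map_inv₀,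
    Polynomial.map_sub, Polynomial.map_one, eval_sub, eval_one]
  refine mul_ne_zero (mul_ne_zero (qPochhammer_ne_zero (hfactor _ ha))
    (qPochhammer_ne_zero (hfactor _ (by rwa [inv_pow, ne_eq, inv_eq_one]))))
    (mul_ne_zero (sub_ne_zero.2 ha.symm) (pow_ne_zero _ (hμ'.ne_zero (by omega))))

end PrimitiveRoot

theorem qPoch_algebraMap (x Q : KK[X]) (m : ℕ) :
    qPoch (algebraMap KK[X] FF x) (algebraMap KK[X] FF Q) m =
      algebraMap KK[X] FF (qPochhammer x Q m) :=
  (map_qPochhammer _ x Q m).symm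

theorem q_eq_algebraMap_X : q = algebraMap KK[X] FF X := RatFunc.algebraMap_X.symm

theorem q_sq : q ^ 2 = algebraMap KK[X] FF (X ^ 2) := by rw [map_pow, q_eq_algebraMap_X]

theorem pa_mul_q_sq : pa * q ^ 2 = algebraMap KK[X] FF (C aK * X ^ 2) := by
  rw [map_mul, q_sq, RatFunc.algebraMap_C, pa]

theorem q_sq_div_pa : q ^ 2 / pa = algebraMap KK[X] FF (C aK⁻¹ * X ^ 2) := by
  rw [map_mul, q_sq, RatFunc.algebraMap_C, pa, map_inv₀, div_eq_inv_mul]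

theorem rhs_eq_algebraMap_div (m : ℕ) :
    ((2 * m + 1 : ℕ) : FF) * (1 - pa) * pa ^ m / ((1 - pa ^ (2 * m + 1)) * q ^ m) =
      algebraMap KK[X] FF (C (((2 * m + 1 : ℕ) : KK) * (1 - aK) * aK ^ m)) /
        algebraMap KK[X] FF (C (1 - aK ^ (2 * m + 1)) * X ^ m) := by
  simp only [q_eq_algebraMap_X, pa, map_mul, map_sub, map_one, map_pow, map_natCast,
    RatFunc.algebraMap_C]

theorem stmt10_general (n : ℕ) (hodd : Odd n) :
    modCong
      ((qPoch q (q ^ 2) ((n - 1) / 2)) ^ 2 /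
        (qPoch (pa * q ^ 2) (q ^ 2) ((n - 1) / 2) * qPoch (q ^ 2 / pa) (q ^ 2) ((n - 1) / 2)))
      ((n : FF) * (1 - pa) * pa ^ ((n - 1) / 2) / ((1 - pa ^ n) * q ^ ((n - 1) / 2)))
      (Polynomial.cyclotomic n KK) := by
  obtain ⟨m, rfl⟩ := hodd
  rw [show (2 * m + 1 - 1) / 2 = m by omega, rhs_eq_algebraMap_div, pa_mul_q_sq, q_sq_div_pa,
    q_sq, q_eq_algebraMap_X, qPoch_algebraMap, qPoch_algebraMap, qPoch_algebraMap, ← map_pow,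
    ← map_mul]
  have hζ := IsCyclotomicExtension.zeta_spec (2 * m + 1) KK (CyclotomicField (2 * m + 1) KK)
  exact modCong_div_div (not_isUnit_of_degree_pos _ (degree_cyclotomic_pos _ _ (by omega)))
    (isCoprime_denominator_cyclotomic hζ) (cyclotomic_dvd_numerator hζ)

theorem stmt10 (n : ℕ) (hn : 0 < n) (hodd : Odd n) :
    modCong
      ((qPoch q (q ^ 2) ((n - 1) / 2)) ^ 2 /
        (qPoch (pa * q ^ 2) (q ^ 2) ((n - 1) / 2) * qPoch (q ^ 2 / pa) (q ^ 2) ((n - 1) / 2)))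
      ((n : FF) * (1 - pa) * pa ^ ((n - 1) / 2) / ((1 - pa ^ n) * q ^ ((n - 1) / 2)))
      (Polynomial.cyclotomic n KK) :=
  stmt10_general n hodd
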